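/- arXiv:1208.3690 — 6 statements merged into one kernel-verified Lean document; each statement's English description precedes it below -/
import Mathlib

section
/- Let g: ℕ → (0,∞) be decreasing with divergent series and let I_g be the associated summable ideal. If A ⊆ ℕ and B ⊆ A, then A ∈ I_g if and only if (B+1) ∪ (A \ B) ∈ I_g. -/
open Set Filter

/-- The summable ideal determined by `g`. -/
def Ig (g : ℕ → ℝ) : Set (Set ℕ) := {A | Summable (A.indicator g)}

/-- `g` determines a tall summable ideal: positive, divergent series, tends to `0`. -/
def SummableTall (g : ℕ → ℝ) : Prop :=
  (∀ n, 0 < g n) ∧ ¬ Summable g ∧ Tendsto g atTop (nhds 0)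

lemma aux_erase_max (g : ℕ → ℝ) (hpos : ∀ n, 0 < g n) (hdec : Antitone g) :
    ∀ (F : Finset ℕ) (hF : F.Nonempty),
      ∑ b ∈ F, g b ≤ g 0 + ∑ b ∈ F.erase (F.max' hF), g (b + 1) := by
  intro F
  induction F using Finset.strongInduction with
  | _ F ih =>
    intro hF
    set M := F.max' hF with hMdef
    have hM : M ∈ F := F.max'_mem hF
    have hsum : ∑ b ∈ F, g b = g M + ∑ b ∈ F.erase M, g b := by
      rw [← Finset.add_sum_erase _ _ hM]
    by_cases h' : (F.erase M).Nonempty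
    · set M' := (F.erase M).max' h' with hM'def
      have hM'mem : M' ∈ F.erase M := (F.erase M).max'_mem h'
      have hM'F : M' ∈ F := Finset.mem_of_mem_erase hM'mem
      have hM'ne : M' ≠ M := Finset.ne_of_mem_erase hM'mem
      have hM'lt : M' < M := lt_of_le_of_ne (F.le_max' _ hM'F) hM'ne
      have hgM : g M ≤ g (M' + 1) := hdec (by omega)
      have hIH := ih (F.erase M) (Finset.erase_ssubset hM) h'
      have hins : ∑ b ∈ F.erase M, g (b + 1)
          = g (M' + 1) + ∑ b ∈ (F.erase M).erase M', g (b + 1) := by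
        rw [← Finset.add_sum_erase _ _ hM'mem]
      rw [hsum, hins]
      linarith
    · have hFM : F = {M} := by
        have hem := Finset.not_nonempty_iff_eq_empty.mp h'
        ext x
        constructor
        · intro hx
          by_cases hxM : x = M
          · simp [hxM]
          · exact absurd (Finset.mem_erase.mpr ⟨hxM, hx⟩) (by simp [hem])
        · intro hx
          simp at hx
          simpa [hx] using hM
      have e1 : ∑ b ∈ F, g b = g M := by rw [hFM, Finset.sum_singleton]
      have e2 : F.erase M = ∅ := by rw [hFM, Finset.erase_singleton]
      rw [e1, e2]
      simpa using hdec (Nat.zero_le M)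

lemma aux_shift (g : ℕ → ℝ) (hpos : ∀ n, 0 < g n) (hdec : Antitone g) (F : Finset ℕ) :
    ∑ b ∈ F, g b ≤ g 0 + ∑ b ∈ F, g (b + 1) := by
  rcases F.eq_empty_or_nonempty with rfl | hF
  · simp [(hpos 0).le]
  · refine (aux_erase_max g hpos hdec F hF).trans ?_
    have : ∑ b ∈ F.erase (F.max' hF), g (b+1) ≤ ∑ b ∈ F, g (b+1) :=
      Finset.sum_le_sum_of_subset_of_nonneg (Finset.erase_subset _ _)
        (fun i _ _ => (hpos _).le)
    linarith

lemma ind_union_le (g : ℕ → ℝ) (hpos : ∀ n, 0 < g n) (s t : Set ℕ) (n : ℕ) :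
    (s ∪ t).indicator g n ≤ s.indicator g n + t.indicator g n := by
  classical
  by_cases hs : n ∈ s
  · by_cases ht : n ∈ t <;>
      simp [Set.indicator_of_mem, Set.indicator_of_notMem, hs, ht, (hpos n).le]
  · by_cases ht : n ∈ t <;>
      simp [Set.indicator_of_mem, Set.indicator_of_notMem, hs, ht, (hpos n).le]

lemma summable_image_iff_shift (g : ℕ → ℝ) (B : Set ℕ) :
    Summable (((fun b => b + 1) '' B).indicator g)
      ↔ Summable (B.indicator (fun n => g (n + 1))) := by
  have hinj : Function.Injective (fun b : ℕ => b + 1) := add_left_injective 1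
  rw [← summable_subtype_iff_indicator, ← summable_subtype_iff_indicator]
  let e := Equiv.Set.image (fun b : ℕ => b + 1) B hinj
  rw [← e.summable_iff]
  rfl

/-- The hard direction: if the shifted set is summable, so is the original. -/
lemma shift_summable (g : ℕ → ℝ) (hpos : ∀ n, 0 < g n) (hdec : Antitone g) (B : Set ℕ)
    (h : Summable (((fun b => b + 1) '' B).indicator g)) :
    Summable (B.indicator g) := by
  classical
  have h1 : Summable (B.indicator (fun n => g (n + 1))) :=
    (summable_image_iff_shift g B).mp h
  apply summable_of_sum_range_le
    (c := g 0 + ∑' n, B.indicator (fun n => g (n + 1)) n)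
    (fun n => Set.indicator_nonneg (fun a _ => (hpos a).le) n)
  intro n
  rw [Finset.sum_indicator_eq_sum_filter]
  set F := (Finset.range n).filter (· ∈ B) with hF
  refine (aux_shift g hpos hdec F).trans ?_
  have hsub : ∑ b ∈ F, g (b + 1) = ∑ b ∈ F, B.indicator (fun n => g (n + 1)) b := by
    apply Finset.sum_congr rfl
    intro b hb
    have : b ∈ B := (Finset.mem_filter.mp hb).2
    simp [Set.indicator_of_mem this]
  rw [hsub]
  have := Summable.sum_le_tsum F
    (fun b _ => Set.indicator_nonneg (fun a _ => (hpos (a+1)).le) b) h1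
  linarith

theorem partial_shift_invariance (g : ℕ → ℝ) (hpos : ∀ n, 0 < g n)
    (hdec : Antitone g) (hdiv : ¬ Summable g) (A B : Set ℕ) (hBA : B ⊆ A) :
    A ∈ Ig g ↔ ((fun b => b + 1) '' B) ∪ (A \ B) ∈ Ig g := by
  classical
  have hnonneg : ∀ (s : Set ℕ) (n : ℕ), 0 ≤ s.indicator g n :=
    fun s n => Set.indicator_nonneg (fun a _ => (hpos a).le) n
  have hmono : ∀ (s t : Set ℕ), s ⊆ t → Summable (t.indicator g) →
      Summable (s.indicator g) := by
    intro s t hst ht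
    exact Summable.of_nonneg_of_le (hnonneg s)
      (fun n => Set.indicator_le_indicator_of_subset hst (fun a => (hpos a).le) n) ht
  constructor
  · intro hA
    have hB : Summable (B.indicator g) := hmono _ _ hBA hA
    have hB1 : Summable (B.indicator (fun n => g (n + 1))) := by
      refine Summable.of_nonneg_of_le
        (fun n => Set.indicator_nonneg (fun a _ => (hpos (a+1)).le) n) ?_ hB
      intro n
      by_cases hn : n ∈ B
      · simp only [Set.indicator_of_mem hn]
        exact hdec (Nat.le_succ n)
      · simp [Set.indicator_of_notMem hn]
    have himg : Summable ((((fun b => b + 1) '' B)).indicator g) :=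
      (summable_image_iff_shift g B).mpr hB1
    have hdiff : Summable ((A \ B).indicator g) := hmono _ _ Set.diff_subset hA
    exact Summable.of_nonneg_of_le (hnonneg _)
      (fun n => ind_union_le g hpos _ _ n) (himg.add hdiff)
  · intro hU
    have himg : Summable ((((fun b => b + 1) '' B)).indicator g) :=
      hmono _ _ Set.subset_union_left hU
    have hdiff : Summable ((A \ B).indicator g) :=
      hmono _ _ Set.subset_union_right hU
    have hB : Summable (B.indicator g) := shift_summable g hpos hdec B himg
    have hAeq : A = B ∪ (A \ B) := (Set.union_diff_cancel hBA).symm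
    rw [show (A ∈ Ig g) ↔ Summable (A.indicator g) from Iff.rfl, hAeq]
    exact Summable.of_nonneg_of_le (hnonneg _)
      (fun n => ind_union_le g hpos _ _ n) (hB.add hdiff)
end

section
/- Assume Martin's Axiom for σ-centered posets. Let I_h be a tall summable ideal and F a filter base on ℕ of cardinality less than the continuum with F ∩ I_h = ∅. Then there exists H ⊆ ℕ with H ∉ I_h such that H \ F is finite for every F ∈ F. -/
open Set Filter

/-- A subset of a poset is centered if every finite subset has a common lower bound. -/
def Centered {P : Type} [PartialOrder P] (S : Set P) : Prop :=
  ∀ T : Finset P, ↑T ⊆ S → ∃ r : P, ∀ p ∈ T, r ≤ p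

/-- A poset is σ-centered if it is a countable union of centered pieces. -/
def SigmaCentered (P : Type) [PartialOrder P] : Prop :=
  ∃ c : P → ℕ, ∀ n : ℕ, Centered {p : P | c p = n}

/-- A filter on a poset: nonempty, upward closed, downward directed. -/
def PosetFilter {P : Type} [PartialOrder P] (G : Set P) : Prop :=
  G.Nonempty ∧ (∀ p ∈ G, ∀ q, p ≤ q → q ∈ G) ∧
    (∀ p ∈ G, ∀ q ∈ G, ∃ r ∈ G, r ≤ p ∧ r ≤ q)

/-- A dense subset of a poset. -/
def DenseBelow {P : Type} [PartialOrder P] (D : Set P) : Prop :=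
  ∀ p : P, ∃ q ∈ D, q ≤ p

/-- Martin's Axiom for σ-centered posets. -/
def MASigmaCentered : Prop :=
  ∀ (P : Type) [PartialOrder P] [Nonempty P], SigmaCentered P →
    ∀ 𝒟 : Set (Set P), Cardinal.mk ↥𝒟 < Cardinal.continuum →
      (∀ D ∈ 𝒟, DenseBelow D) →
      ∃ G : Set P, PosetFilter G ∧ ∀ D ∈ 𝒟, (G ∩ D).Nonempty

/-- A Mathias–Prikry style forcing condition: a finite set and a member of `ℱ`. -/
structure MPCond (ℱ : Set (Set ℕ)) where
  s : Finset ℕ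
  F : Set ℕ
  hF : F ∈ ℱ

namespace MPCond

variable {ℱ : Set (Set ℕ)}

instance : PartialOrder (MPCond ℱ) where
  le q p := p.s ⊆ q.s ∧ q.F ⊆ p.F ∧ (↑q.s \ ↑p.s : Set ℕ) ⊆ p.F
  le_refl p := ⟨subset_rfl, subset_rfl, by simp⟩
  le_trans u t p h1 h2 := by
    refine ⟨h2.1.trans h1.1, h1.2.1.trans h2.2.1, ?_⟩
    rintro m ⟨hmu, hmp⟩
    by_cases hmt : m ∈ t.s
    · exact h2.2.2 ⟨hmt, hmp⟩
    · exact h2.2.1 (h1.2.2 ⟨hmu, hmt⟩)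
  le_antisymm p q h1 h2 := by
    obtain ⟨s₁, F₁, hF₁⟩ := p
    obtain ⟨s₂, F₂, hF₂⟩ := q
    obtain ⟨hs, hF, -⟩ := h1
    obtain ⟨hs', hF', -⟩ := h2
    have e1 : s₁ = s₂ := Finset.Subset.antisymm hs' hs
    have e2 : F₁ = F₂ := subset_antisymm hF hF'
    subst e1; subst e2; rfl

lemma le_def {q p : MPCond ℱ} :
    q ≤ p ↔ p.s ⊆ q.s ∧ q.F ⊆ p.F ∧ (↑q.s \ ↑p.s : Set ℕ) ⊆ p.F := Iff.rfl

end MPCond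

/-- A finite family from a filter base has a common lower bound in the base. -/
lemma exists_subset_all {ℱ : Set (Set ℕ)} (hne : ℱ.Nonempty)
    (hbase : ∀ A ∈ ℱ, ∀ B ∈ ℱ, ∃ C ∈ ℱ, C ⊆ A ∩ B) (T : Finset (Set ℕ))
    (hT : ∀ A ∈ T, A ∈ ℱ) : ∃ C ∈ ℱ, ∀ A ∈ T, C ⊆ A := by
  classical
  induction T using Finset.induction with
  | empty => exact ⟨hne.choose, hne.choose_spec, by simp⟩
  | @insert B T' hx ih =>
    obtain ⟨C, hC, hCall⟩ := ih (fun A hA => hT A (Finset.mem_insert_of_mem hA))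
    obtain ⟨D, hD, hDsub⟩ := hbase B (hT B (Finset.mem_insert_self _ _)) C hC
    refine ⟨D, hD, ?_⟩
    intro A hA
    rcases Finset.mem_insert.1 hA with rfl | hA
    · exact hDsub.trans inter_subset_left
    · exact (hDsub.trans inter_subset_right).trans (hCall A hA)

theorem oneset (hMA : MASigmaCentered) (h : ℕ → ℝ) (hh : SummableTall h)
    (ℱ : Set (Set ℕ)) (hne : ℱ.Nonempty)
    (hbase : ∀ A ∈ ℱ, ∀ B ∈ ℱ, ∃ C ∈ ℱ, C ⊆ A ∩ B)
    (hcard : Cardinal.mk ↥ℱ < Cardinal.continuum)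
    (hdisj : ∀ A ∈ ℱ, A ∉ Ig h) :
    ∃ H : Set ℕ, H ∉ Ig h ∧ ∀ A ∈ ℱ, (H \ A).Finite := by
  classical
  obtain ⟨hpos, -, -⟩ := hh
  have hnn : ∀ n, 0 ≤ h n := fun n => (hpos n).le
  haveI : Nonempty (MPCond ℱ) := ⟨⟨∅, hne.choose, hne.choose_spec⟩⟩
  -- the poset is σ-centered
  have hsc : SigmaCentered (MPCond ℱ) := by
    refine ⟨fun p => Encodable.encode p.s, fun n T hT => ?_⟩
    rcases T.eq_empty_or_nonempty with rfl | ⟨p₀, hp₀⟩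
    · exact ⟨⟨∅, hne.choose, hne.choose_spec⟩, by simp⟩
    · have hsame : ∀ p ∈ T, p.s = p₀.s := by
        intro p hp
        have h1 : Encodable.encode p.s = n := hT hp
        have h2 : Encodable.encode p₀.s = n := hT hp₀
        exact Encodable.encode_injective (h1.trans h2.symm)
      obtain ⟨C, hC, hCall⟩ := exists_subset_all hne hbase (T.image MPCond.F)
        (by intro A hA; obtain ⟨p, -, rfl⟩ := Finset.mem_image.1 hA; exact p.hF)
      refine ⟨⟨p₀.s, C, hC⟩, fun p hp => ?_⟩
      refine ⟨by rw [hsame p hp], hCall p.F (Finset.mem_image_of_mem _ hp), ?_⟩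
      rw [hsame p hp]; simp
  -- unbounded partial sums over each member of ℱ
  have hunbdd : ∀ F ∈ ℱ, ∀ c : ℝ, ∃ t : Finset ℕ, ↑t ⊆ F ∧ c ≤ ∑ m ∈ t, h m := by
    intro F hF c
    have hns : ¬ Summable (F.indicator h) := hdisj F hF
    have hnn' : ∀ n, 0 ≤ F.indicator h n := fun n => Set.indicator_nonneg (fun m _ => hnn m) n
    have htend : Tendsto (fun n => ∑ i ∈ Finset.range n, F.indicator h i) atTop atTop := by
      by_contra hcon
      exact hns ((summable_iff_not_tendsto_nat_atTop_of_nonneg hnn').2 hcon)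
    obtain ⟨N, hN⟩ := (htend.eventually_ge_atTop c).exists
    refine ⟨(Finset.range N).filter (· ∈ F), by intro m hm; exact (Finset.mem_filter.1 hm).2, ?_⟩
    have : ∑ m ∈ (Finset.range N).filter (· ∈ F), h m
        = ∑ i ∈ Finset.range N, F.indicator h i := by
      rw [Finset.sum_filter]
      exact Finset.sum_congr rfl fun i _ => by simp [Set.indicator_apply]
    rw [this]; exact hN
  -- dense sets
  set Dn : ℕ → Set (MPCond ℱ) := fun n => {p | (n : ℝ) ≤ ∑ m ∈ p.s, h m} with hDn
  set EA : Set ℕ → Set (MPCond ℱ) := fun A => {p | p.F ⊆ A} with hEA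
  have hDnDense : ∀ n, DenseBelow (Dn n) := by
    intro n p
    obtain ⟨t, htF, hts⟩ := hunbdd p.F p.hF n
    refine ⟨⟨p.s ∪ t, p.F, p.hF⟩, ?_, ?_⟩
    · show (n : ℝ) ≤ ∑ m ∈ p.s ∪ t, h m
      refine hts.trans (Finset.sum_le_sum_of_subset_of_nonneg Finset.subset_union_right
        fun m _ _ => hnn m)
    · exact ⟨Finset.subset_union_left, subset_rfl, by
        intro m hm
        rcases hm with ⟨hm1, hm2⟩
        rcases Finset.mem_union.1 hm1 with hm | hm
        · exact absurd hm hm2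
        · exact htF hm⟩
  have hEADense : ∀ A ∈ ℱ, DenseBelow (EA A) := by
    intro A hA p
    obtain ⟨C, hC, hCsub⟩ := hbase A hA p.F p.hF
    exact ⟨⟨p.s, C, hC⟩, hCsub.trans inter_subset_left,
      subset_rfl, hCsub.trans inter_subset_right, by simp⟩
  -- the family of dense sets
  set 𝒟 : Set (Set (MPCond ℱ)) := (Set.range Dn) ∪ (EA '' ℱ) with h𝒟
  have hcard𝒟 : Cardinal.mk ↥𝒟 < Cardinal.continuum := by
    refine lt_of_le_of_lt (Cardinal.mk_union_le _ _) ?_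
    refine Cardinal.add_lt_of_lt Cardinal.aleph0_le_continuum ?_ ?_
    · calc Cardinal.mk ↥(Set.range Dn) ≤ Cardinal.mk ℕ := Cardinal.mk_range_le
        _ = Cardinal.aleph0 := Cardinal.mk_nat
        _ < Cardinal.continuum := Cardinal.aleph0_lt_continuum
    · exact lt_of_le_of_lt Cardinal.mk_image_le hcard
  obtain ⟨G, hGfilt, hGmeet⟩ := hMA (MPCond ℱ) hsc 𝒟 hcard𝒟 (by
    rintro D (⟨n, rfl⟩ | ⟨A, hA, rfl⟩)
    · exact hDnDense n
    · exact hEADense A hA)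
  -- the generic real
  refine ⟨{m | ∃ p ∈ G, m ∈ p.s}, ?_, ?_⟩
  · -- H is not in the ideal
    intro hsum
    have hsum' : Summable (Set.indicator {m | ∃ p ∈ G, m ∈ p.s} h) := hsum
    obtain ⟨n, hn⟩ := exists_nat_gt (∑' m, Set.indicator {m | ∃ p ∈ G, m ∈ p.s} h m)
    obtain ⟨p, hpG, hpD⟩ := hGmeet (Dn n) (Or.inl ⟨n, rfl⟩)
    have hsub : ∀ m ∈ p.s, Set.indicator {m | ∃ p ∈ G, m ∈ p.s} h m = h m := by
      intro m hm
      exact Set.indicator_of_mem (show m ∈ {m | ∃ p ∈ G, m ∈ p.s} from ⟨p, hpG, hm⟩) h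
    have hle : ∑ m ∈ p.s, h m ≤ ∑' m, Set.indicator {m | ∃ p ∈ G, m ∈ p.s} h m := by
      calc ∑ m ∈ p.s, h m = ∑ m ∈ p.s, Set.indicator {m | ∃ p ∈ G, m ∈ p.s} h m :=
            (Finset.sum_congr rfl fun m hm => (hsub m hm).symm)
        _ ≤ _ := Summable.sum_le_tsum p.s
            (fun m _ => Set.indicator_nonneg (fun k _ => hnn k) m) hsum'
    exact absurd (le_trans hpD hle) (not_le.2 hn)
  · -- almost contained in every member of ℱ
    intro A hA
    obtain ⟨q, hqG, hqE⟩ := hGmeet (EA A) (Or.inr ⟨A, hA, rfl⟩)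
    refine Set.Finite.subset q.s.finite_toSet ?_
    rintro m ⟨⟨p, hpG, hmp⟩, hmA⟩
    obtain ⟨r, hrG, hrp, hrq⟩ := hGfilt.2.2 p hpG q hqG
    have hmr : m ∈ r.s := hrp.1 hmp
    by_contra hmq
    exact hmA (hqE (hrq.2.2 ⟨hmr, hmq⟩))
end

section
/- For every tall summable ideal I_g there exists a tall summable ideal I_h such that I_g is not Katětov-below I_h, i.e., for every f: ℕ → ℕ there exists A ∈ I_g with f⁻¹[A] ∉ I_h. -/
open Set Filter

/-!
Put `w = ofReal ∘ g` and let `ν = f_* h` be the pushforward of `h` along `f`. If for every `k`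
`ν` has infinite mass on `{m | 2 ^ k * w m < ν m}`, then `f` is not a Katětov reduction: picking
in each of these sets, beyond `k`, a finite piece of `ν`-mass at least `1` and `w`-mass at most
`2 ^ (1 - k)` gives a set of finite `w`-mass and infinite `ν`-mass.

The weight `h` is constant `2⁻¹ ^ j` on consecutive blocks, block `j` having mass at least
`j + 1 + M j`, where `M j` is the mass of `j * w` above `2⁻¹ ^ j` (finite because `g → 0`). For
`j ≥ 2 ^ k`, the points of block `j` that `f` sends outside `{2 ^ k * w < ν}` land where
`2⁻¹ ^ j ≤ ν ≤ 2 ^ k * w`, a set of `ν`-mass at most `M j`; so the mass of `ν` on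
`{2 ^ k * w < ν}` is at least `j + 1` for every large `j`.
-/

open scoped ENNReal Topology

lemma summable_iff_tsum_ofReal_ne_top {α : Type*} {u : α → ℝ} (hu : 0 ≤ u) :
    Summable u ↔ ∑' a, ENNReal.ofReal (u a) ≠ ∞ :=
  ⟨Summable.tsum_ofReal_ne_top, fun h => by
    simpa [ENNReal.toReal_ofReal (hu _)] using ENNReal.summable_toReal h⟩

lemma mem_Ig_iff {g : ℕ → ℝ} (hg : 0 ≤ g) {A : Set ℕ} :
    A ∈ Ig g ↔ ∑' m : A, ENNReal.ofReal (g m) ≠ ∞ := by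
  rw [Ig, mem_ofPred_eq, summable_iff_tsum_ofReal_ne_top (indicator_nonneg fun m _ => hg m),
    tsum_subtype A fun m => ENNReal.ofReal (g m)]
  congr! 3 with m
  by_cases hm : m ∈ A <;> simp [hm]

section Pushforward

variable {α β : Type*}

noncomputable def fiberSum (f : α → β) (u : α → ℝ≥0∞) (b : β) : ℝ≥0∞ :=
  ∑' a : f ⁻¹' {b}, u a

lemma tsum_preimage_eq_tsum_fiberSum (f : α → β) (u : α → ℝ≥0∞) (s : Set β) :
    ∑' a : f ⁻¹' s, u a = ∑' b : s, fiberSum f u b := by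
  rw [tsum_subtype, tsum_subtype, ← ENNReal.tsum_fiberwise _ f]
  refine tsum_congr fun b => ?_
  by_cases hb : b ∈ s
  · rw [indicator_of_mem hb, fiberSum]
    refine tsum_congr fun a => indicator_of_mem ?_ u
    rwa [mem_preimage, (a.2 : f a = b)]
  · rw [indicator_of_notMem hb]
    refine ENNReal.tsum_eq_zero.2 fun a => indicator_of_notMem ?_ u
    rwa [mem_preimage, (a.2 : f a = b)]

lemma le_fiberSum (f : α → β) (u : α → ℝ≥0∞) (a : α) : u a ≤ fiberSum f u (f a) :=
  ENNReal.le_tsum (⟨a, rfl⟩ : f ⁻¹' {f a})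

end Pushforward

noncomputable def massAbove {α : Type*} (v : α → ℝ≥0∞) (ε : ℝ≥0∞) : ℝ≥0∞ :=
  ∑' a : {a | ε ≤ v a}, v a

lemma massAbove_mono {α : Type*} {v v' : α → ℝ≥0∞} (h : v ≤ v') (ε : ℝ≥0∞) :
    massAbove v ε ≤ massAbove v' ε :=
  (ENNReal.tsum_le_tsum fun a : {a | ε ≤ v a} => h a).trans
    (ENNReal.tsum_mono_subtype v' fun a ha => le_trans ha (h a))

lemma tsum_range_ne_top {v : ℕ → ℝ≥0∞} (hv : ∀ m, v m ≠ ∞) (N : ℕ) :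
    ∑' m : (Finset.range N : Set ℕ), v m ≠ ∞ := by
  rw [Finset.tsum_subtype']
  exact ENNReal.sum_ne_top.2 fun m _ => hv m

lemma massAbove_ne_top {v : ℕ → ℝ≥0∞} (hv : Tendsto v atTop (𝓝 0)) (hv_top : ∀ m, v m ≠ ∞)
    {ε : ℝ≥0∞} (hε : ε ≠ 0) : massAbove v ε ≠ ∞ := by
  obtain ⟨N, hN⟩ := eventually_atTop.1 (hv.eventually_lt_const (pos_iff_ne_zero.2 hε))
  refine ne_top_of_le_ne_top (tsum_range_ne_top hv_top N) (ENNReal.tsum_mono_subtype v ?_)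
  intro m hm
  by_contra hmN
  exact (hN m (by simpa using hmN)).not_ge hm

/-- Greedy selection: walking through `S` in increasing order, stop as soon as the `ν`-mass
reaches `1`; the last step adds at most `ε` to the `w`-mass. -/
lemma exists_finset_one_le_sum_and_sum_le {w ν : ℕ → ℝ≥0∞} {S : Set ℕ} {ε : ℝ≥0∞}
    (hS : ∑' m : S, ν m = ∞) (hwε : ∀ m ∈ S, w m ≤ ε) (hwν : ∀ m ∈ S, w m ≤ ε * ν m) :
    ∃ F : Finset ℕ, ↑F ⊆ S ∧ 1 ≤ ∑ m ∈ F, ν m ∧ ∑ m ∈ F, w m ≤ 2 * ε := by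
  classical
  have hex : ∃ n, 1 ≤ ∑ m ∈ Finset.range n, S.indicator ν m := by
    rw [tsum_subtype, ENNReal.tsum_eq_iSup_nat] at hS
    obtain ⟨n, hn⟩ := lt_iSup_iff.1 (hS ▸ ENNReal.one_lt_top)
    exact ⟨n, hn.le⟩
  obtain ⟨n, hn⟩ : ∃ n, Nat.find hex = n + 1 :=
    Nat.exists_eq_add_one.2 (Nat.pos_of_ne_zero fun h0 => by simpa [h0] using Nat.find_spec hex)
  have hlt : ∑ m ∈ Finset.range n, S.indicator ν m < 1 :=
    not_le.1 (Nat.find_min hex (by omega))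
  refine ⟨(Finset.range (n + 1)).filter (· ∈ S), fun m hm => (Finset.mem_filter.1 hm).2, ?_, ?_⟩
  · rw [Finset.sum_filter, ← hn]
    simpa [indicator_apply] using Nat.find_spec hex
  · rw [Finset.sum_filter, Finset.sum_range_succ, two_mul]
    have hinit : ∑ m ∈ Finset.range n, S.indicator w m ≤ ε :=
      calc ∑ m ∈ Finset.range n, S.indicator w m
          ≤ ∑ m ∈ Finset.range n, ε * S.indicator ν m := by
            refine Finset.sum_le_sum fun m _ => ?_
            by_cases hm : m ∈ S <;> simp [hm, hwν]
        _ ≤ ε := by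
            rw [← Finset.mul_sum]
            exact mul_le_of_le_one_right' hlt.le
    gcongr
    · simpa [indicator_apply] using hinit
    · split_ifs with h
      exacts [hwε n h, zero_le]

lemma tsum_eq_top_of_forall_exists_finset {ν : ℕ → ℝ≥0∞} {A : Set ℕ}
    (h : ∀ N, ∃ F : Finset ℕ, ↑F ⊆ A ∧ (∀ m ∈ F, N ≤ m) ∧ 1 ≤ ∑ m ∈ F, ν m) :
    ∑' m : A, ν m = ∞ := by
  classical
  have hK : ∀ K : ℕ, ∃ G : Finset ℕ, ↑G ⊆ A ∧ (K : ℝ≥0∞) ≤ ∑ m ∈ G, ν m := by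
    intro K
    induction K with
    | zero => exact ⟨∅, by simp, by simp⟩
    | succ K ih =>
      obtain ⟨G, hGA, hG⟩ := ih
      obtain ⟨F, hFA, hFN, hF⟩ := h (G.sup id + 1)
      have hdisj : Disjoint G F := Finset.disjoint_left.2 fun m hmG hmF =>
        (hFN m hmF).not_gt (Nat.lt_succ_of_le (Finset.le_sup (f := id) hmG))
      refine ⟨G ∪ F, by simp [hGA, hFA], ?_⟩
      rw [Finset.sum_union hdisj, Nat.cast_succ]
      gcongr
  refine ENNReal.eq_top_of_forall_nnreal_le fun r => ?_
  obtain ⟨K, hK'⟩ := exists_nat_ge r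
  obtain ⟨G, hGA, hG⟩ := hK K
  calc (r : ℝ≥0∞) ≤ K := by exact_mod_cast hK'
    _ ≤ ∑ m ∈ G, ν m := hG
    _ = ∑' m : (G : Set ℕ), ν m := (Finset.tsum_subtype' G ν).symm
    _ ≤ ∑' m : A, ν m := ENNReal.tsum_mono_subtype ν hGA

lemma le_inv_two_pow_mul_of_two_pow_mul_le {a b : ℝ≥0∞} (k : ℕ) (h : 2 ^ k * a ≤ b) :
    a ≤ 2⁻¹ ^ k * b :=
  calc a = 2⁻¹ ^ k * (2 ^ k * a) := by
        rw [← mul_assoc, ← mul_pow, ENNReal.inv_mul_cancel two_ne_zero ENNReal.ofNat_ne_top,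
          one_pow, one_mul]
    _ ≤ 2⁻¹ ^ k * b := by gcongr

theorem exists_tsum_ne_top_and_tsum_eq_top {w ν : ℕ → ℝ≥0∞} (hw : Tendsto w atTop (𝓝 0))
    (hw_top : ∀ m, w m ≠ ∞) (hν : ∀ k : ℕ, ∑' m : {m | 2 ^ k * w m < ν m}, ν m = ∞) :
    ∃ A : Set ℕ, ∑' m : A, w m ≠ ∞ ∧ ∑' m : A, ν m = ∞ := by
  by_cases hν_top : ∃ m, ν m = ∞
  · obtain ⟨m, hm⟩ := hν_top
    exact ⟨{m}, by simpa using hw_top m, by simpa using hm⟩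
  push Not at hν_top
  have hsel : ∀ k, ∃ F : Finset ℕ, (∀ m ∈ F, k ≤ m) ∧ 1 ≤ ∑ m ∈ F, ν m ∧
      ∑ m ∈ F, w m ≤ 2 * 2⁻¹ ^ k := by
    intro k
    obtain ⟨N, hN⟩ := eventually_atTop.1 <|
      (ENNReal.tendsto_nhds_zero.1 hw (2⁻¹ ^ k) (ENNReal.pow_pos (by simp) k)).and
        (eventually_ge_atTop k)
    set S := {m | 2 ^ k * w m < ν m} \ ↑(Finset.range N)
    have hNS : ∀ m ∈ S, N ≤ m := fun m hm => by simpa using hm.2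
    have hS : ∑' m : S, ν m = ∞ := by
      refine (ENNReal.add_eq_top.1 (top_unique ?_)).resolve_right (tsum_range_ne_top hν_top N)
      calc ∞ = ∑' m : {m | 2 ^ k * w m < ν m}, ν m := (hν k).symm
        _ ≤ ∑' m : ↑(S ∪ ↑(Finset.range N)), ν m :=
            ENNReal.tsum_mono_subtype ν (subset_sdiff_union _ _)
        _ ≤ _ := ENNReal.tsum_union_le ν _ _
    obtain ⟨F, hFS, hF⟩ := exists_finset_one_le_sum_and_sum_le hS
      (fun m hm => (hN m (hNS m hm)).1)
      (fun m hm => le_inv_two_pow_mul_of_two_pow_mul_le k hm.1.le)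
    exact ⟨F, fun m hm => (hN m (hNS m (hFS hm))).2, hF⟩
  choose F hF_ge hF_ν hF_w using hsel
  refine ⟨⋃ k, ↑(F k), ne_top_of_le_ne_top ?_ (ENNReal.tsum_iUnion_le_tsum w _),
    tsum_eq_top_of_forall_exists_finset fun N =>
      ⟨F N, subset_iUnion (fun k => (F k : Set ℕ)) N, hF_ge N, hF_ν N⟩⟩
  refine ne_top_of_le_ne_top (b := ∑' k : ℕ, 2 * 2⁻¹ ^ k) ?_ (ENNReal.tsum_le_tsum fun k => ?_)
  · rw [ENNReal.tsum_mul_left, ENNReal.tsum_geometric_two]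
    exact ENNReal.mul_ne_top ENNReal.ofNat_ne_top ENNReal.ofNat_ne_top
  · rw [Finset.tsum_subtype']
    exact hF_w k

/-- A point of `B` that `f` sends outside `{c * w < fiberSum f u}` lands where
`ε ≤ fiberSum f u ≤ c * w`. -/
lemma sum_le_tsum_fiberSum_add_massAbove {α β : Type*} (f : α → β) (u : α → ℝ≥0∞)
    (w : β → ℝ≥0∞) (c ε : ℝ≥0∞) (B : Finset α) (hB : ∀ a ∈ B, ε ≤ u a) :
    ∑ a ∈ B, u a ≤ ∑' b : {b | c * w b < fiberSum f u b}, fiberSum f u b +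
      massAbove (fun b => c * w b) ε := by
  set Bad := {b | c * w b < fiberSum f u b}
  set T := Badᶜ ∩ {b | ε ≤ c * w b}
  have hB_sub : (B : Set α) ⊆ f ⁻¹' (Bad ∪ T) := by
    intro a ha
    by_cases hbad : f a ∈ Bad
    · exact Or.inl hbad
    · exact Or.inr ⟨hbad, (hB a ha).trans ((le_fiberSum f u a).trans (not_lt.1 hbad))⟩
  calc ∑ a ∈ B, u a = ∑' a : (B : Set α), u a := (Finset.tsum_subtype' B u).symm
    _ ≤ ∑' a : f ⁻¹' (Bad ∪ T), u a := ENNReal.tsum_mono_subtype u hB_sub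
    _ = ∑' b : ↑(Bad ∪ T), fiberSum f u b := tsum_preimage_eq_tsum_fiberSum f u _
    _ ≤ ∑' b : Bad, fiberSum f u b + ∑' b : T, fiberSum f u b := ENNReal.tsum_union_le _ _ _
    _ ≤ _ := by
        gcongr
        calc ∑' b : T, fiberSum f u b ≤ ∑' b : T, c * w b :=
              ENNReal.tsum_le_tsum fun b => not_lt.1 b.2.1
          _ ≤ massAbove (fun b => c * w b) ε :=
              ENNReal.tsum_mono_subtype (fun b => c * w b) (s := T) inter_subset_right

noncomputable section BlockWeight

variable (w : ℕ → ℝ≥0∞)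

/-- Block `j` carries the constant weight `2⁻¹ ^ j`; its length makes the block's total weight
at least `j + 1 + massAbove (j * w) (2⁻¹ ^ j)`. -/
def blockLength (j : ℕ) : ℕ :=
  ⌈((j : ℝ) + 1 + (massAbove (fun m => j * w m) (2⁻¹ ^ j)).toReal) * 2 ^ j⌉₊

def blockStart (j : ℕ) : ℕ := ∑ i ∈ Finset.range j, blockLength w i

def blockIndex (n : ℕ) : ℕ := Nat.findGreatest (fun j => blockStart w j ≤ n) n

def blockWeight (n : ℕ) : ℝ := 2⁻¹ ^ blockIndex w n

lemma blockStart_succ (j : ℕ) : blockStart w (j + 1) = blockStart w j + blockLength w j :=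
  Finset.sum_range_succ _ _

lemma blockStart_strictMono : StrictMono (blockStart w) :=
  strictMono_nat_of_lt_succ fun j => by
    rw [blockStart_succ]
    exact Nat.lt_add_of_pos_right (Nat.ceil_pos.2 (by positivity))

lemma le_blockIndex {j n : ℕ} (h : blockStart w j ≤ n) : j ≤ blockIndex w n :=
  Nat.le_findGreatest (((blockStart_strictMono w).id_le j).trans h) h

lemma blockIndex_eq {j n : ℕ} (h₁ : blockStart w j ≤ n) (h₂ : n < blockStart w (j + 1)) :
    blockIndex w n = j := by
  refine le_antisymm (Nat.lt_succ_iff.1 ((blockStart_strictMono w).lt_iff_lt.1 ?_))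
    (le_blockIndex w h₁)
  exact (Nat.findGreatest_spec (P := fun j => blockStart w j ≤ n) (Nat.zero_le n)
    (by simp [blockStart])).trans_lt h₂

lemma blockWeight_pos (n : ℕ) : 0 < blockWeight w n := by
  unfold blockWeight; positivity

lemma ofReal_blockWeight (n : ℕ) :
    ENNReal.ofReal (blockWeight w n) = 2⁻¹ ^ blockIndex w n := by
  rw [blockWeight, ENNReal.ofReal_pow (by norm_num), ENNReal.ofReal_inv_of_pos two_pos,
    ENNReal.ofReal_ofNat]

lemma tendsto_blockWeight : Tendsto (blockWeight w) atTop (𝓝 0) :=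
  (tendsto_pow_atTop_nhds_zero_of_lt_one (by norm_num) (by norm_num)).comp <|
    tendsto_atTop_atTop.2 fun j => ⟨blockStart w j, fun _ => le_blockIndex w⟩

variable {w}

lemma ofReal_blockWeight_of_mem {j n : ℕ}
    (hn : n ∈ Finset.Ico (blockStart w j) (blockStart w (j + 1))) :
    ENNReal.ofReal (blockWeight w n) = 2⁻¹ ^ j := by
  rw [Finset.mem_Ico] at hn
  rw [ofReal_blockWeight, blockIndex_eq w hn.1 hn.2]

lemma massAbove_natCast_mul_ne_top (hw : Tendsto w atTop (𝓝 0)) (hw_top : ∀ m, w m ≠ ∞)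
    (j : ℕ) {ε : ℝ≥0∞} (hε : ε ≠ 0) : massAbove (fun m => j * w m) ε ≠ ∞ := by
  refine massAbove_ne_top ?_
    (fun m => ENNReal.mul_ne_top (ENNReal.natCast_ne_top j) (hw_top m)) hε
  simpa using ENNReal.Tendsto.const_mul hw (Or.inr (ENNReal.natCast_ne_top j))

lemma le_sum_blockWeight (hw : Tendsto w atTop (𝓝 0)) (hw_top : ∀ m, w m ≠ ∞) (j : ℕ) :
    (j : ℝ≥0∞) + 1 + massAbove (fun m => j * w m) (2⁻¹ ^ j) ≤
      ∑ n ∈ Finset.Ico (blockStart w j) (blockStart w (j + 1)),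
        ENNReal.ofReal (blockWeight w n) := by
  set M := massAbove (fun m => j * w m) (2⁻¹ ^ j)
  rw [Finset.sum_congr rfl fun n => ofReal_blockWeight_of_mem, Finset.sum_const, Nat.card_Ico,
    blockStart_succ, Nat.add_sub_cancel_left, nsmul_eq_mul]
  set x : ℝ := (j : ℝ) + 1 + M.toReal
  have hx : (j : ℝ≥0∞) + 1 + M = ENNReal.ofReal x := by
    rw [ENNReal.ofReal_add (by positivity) ENNReal.toReal_nonneg,
      ENNReal.ofReal_toReal (massAbove_natCast_mul_ne_top hw hw_top j (by simp)),
      ENNReal.ofReal_add (by positivity) zero_le_one, ENNReal.ofReal_natCast, ENNReal.ofReal_one]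
  have hlen : ENNReal.ofReal (x * 2 ^ j) ≤ blockLength w j := by
    rw [← ENNReal.ofReal_natCast]
    exact ENNReal.ofReal_le_ofReal (Nat.le_ceil _)
  calc (j : ℝ≥0∞) + 1 + M = ENNReal.ofReal (x * 2 ^ j) * 2⁻¹ ^ j := by
        rw [ENNReal.ofReal_mul (by positivity), ENNReal.ofReal_pow zero_le_two,
          ENNReal.ofReal_ofNat, mul_assoc, ← mul_pow,
          ENNReal.mul_inv_cancel two_ne_zero ENNReal.ofNat_ne_top, one_pow, mul_one, hx]
    _ ≤ blockLength w j * 2⁻¹ ^ j := by gcongr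

lemma summableTall_blockWeight (hw : Tendsto w atTop (𝓝 0)) (hw_top : ∀ m, w m ≠ ∞) :
    SummableTall (blockWeight w) := by
  refine ⟨blockWeight_pos w, fun hs => ?_, tendsto_blockWeight w⟩
  refine (summable_iff_tsum_ofReal_ne_top fun n => (blockWeight_pos w n).le).1 hs <|
    ENNReal.eq_top_of_forall_nnreal_le fun r => ?_
  obtain ⟨j, hj⟩ := exists_nat_ge r
  calc (r : ℝ≥0∞) ≤ j := by exact_mod_cast hj
    _ ≤ (j : ℝ≥0∞) + 1 + massAbove (fun m => j * w m) (2⁻¹ ^ j) := by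
        rw [add_assoc]; exact le_self_add
    _ ≤ _ := le_sum_blockWeight hw hw_top j
    _ ≤ _ := ENNReal.sum_le_tsum _

lemma tsum_fiberSum_blockWeight_eq_top (hw : Tendsto w atTop (𝓝 0)) (hw_top : ∀ m, w m ≠ ∞)
    (f : ℕ → ℕ) (k : ℕ) :
    ∑' m : {m | 2 ^ k * w m < fiberSum f (fun n => ENNReal.ofReal (blockWeight w n)) m},
      fiberSum f (fun n => ENNReal.ofReal (blockWeight w n)) m = ∞ := by
  set ν := fiberSum f (fun n => ENNReal.ofReal (blockWeight w n))
  set X := ∑' m : {m | 2 ^ k * w m < ν m}, ν m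
  have hX : ∀ j : ℕ, 2 ^ k ≤ j → (j : ℝ≥0∞) + 1 ≤ X := by
    intro j hj
    have hmass : massAbove (fun m => 2 ^ k * w m) (2⁻¹ ^ j) ≤
        massAbove (fun m => j * w m) (2⁻¹ ^ j) :=
      massAbove_mono (fun m => by gcongr; exact_mod_cast hj) _
    have hM := massAbove_natCast_mul_ne_top hw hw_top j (ε := 2⁻¹ ^ j) (by simp)
    refine ENNReal.le_of_add_le_add_right hM <| (le_sum_blockWeight hw hw_top j).trans <|
      (sum_le_tsum_fiberSum_add_massAbove f _ w _ (2⁻¹ ^ j) _ fun n hn =>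
        (ofReal_blockWeight_of_mem hn).ge).trans (add_le_add_right hmass X)
  refine ENNReal.eq_top_of_forall_nnreal_le fun r => ?_
  obtain ⟨j, hj⟩ := exists_nat_ge (max r (2 ^ k))
  calc (r : ℝ≥0∞) ≤ j := by exact_mod_cast le_of_max_le_left hj
    _ ≤ (j : ℝ≥0∞) + 1 := le_self_add
    _ ≤ X := hX j (by exact_mod_cast le_of_max_le_right hj)

end BlockWeight

theorem noMinimals (g : ℕ → ℝ) (hg : SummableTall g) :
    ∃ h : ℕ → ℝ, SummableTall h ∧
      ∀ f : ℕ → ℕ, ∃ A ∈ Ig g, f ⁻¹' A ∉ Ig h := by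
  obtain ⟨hg_pos, -, hg_lim⟩ := hg
  set w : ℕ → ℝ≥0∞ := fun m => ENNReal.ofReal (g m)
  have hw : Tendsto w atTop (𝓝 0) := ENNReal.ofReal_zero ▸ ENNReal.tendsto_ofReal hg_lim
  have hw_top : ∀ m, w m ≠ ∞ := fun m => ENNReal.ofReal_ne_top
  refine ⟨blockWeight w, summableTall_blockWeight hw hw_top, fun f => ?_⟩
  obtain ⟨A, hA_small, hA_large⟩ := exists_tsum_ne_top_and_tsum_eq_top hw hw_top
    (tsum_fiberSum_blockWeight_eq_top hw hw_top f)
  refine ⟨A, (mem_Ig_iff fun m => (hg_pos m).le).2 hA_small, fun hA => ?_⟩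
  rw [mem_Ig_iff fun n => (blockWeight_pos w n).le] at hA
  exact hA ((tsum_preimage_eq_tsum_fiberSum f _ A).trans hA_large)
end

section
/- Assume Martin's Axiom for σ-centered posets. For every tall summable ideal I_g there exists an I_g-ultrafilter on ℕ which is not a rapid ultrafilter. -/
open Set Filter

/-- `U` is an `I`-ultrafilter: every function maps some member of `U` into `I`. -/
def IUlt (U : Ultrafilter ℕ) (I : Set (Set ℕ)) : Prop :=
  ∀ F : ℕ → ℕ, ∃ A ∈ U, F '' A ∈ I

/-- `U` is rapid: the enumeration functions of its members form a dominating family. -/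
def Rapid (U : Ultrafilter ℕ) : Prop :=
  ∀ f : ℕ → ℕ, ∃ A ∈ U, A.Infinite ∧ ∀ᶠ n in atTop, f n ≤ Nat.nth (· ∈ A) n

/-!
Let `τ_Q(n)` (`scale`) be a table growing fast in `Q` and `f n = τ_n(n)` (`diag`). Call `X ⊆ ℕ`
small if for some `Q`, eventually `X` has fewer than `τ_Q(n)` elements below `f n`. Small sets
form an ideal containing the finite sets; let `coSmall` be its dual filter. An ultrafilter
`U ≤ coSmall` is not rapid: every `A ∈ U` is not small, so infinitely often `A` has
`n + 1 = τ_0(n)` elements below `f n`, i.e. the `n`-th element of `A` lies below `f n`.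

Under MA(σ-centered) we build, by a recursion of length `𝔠`, a family `S` with
`generate S ⊓ coSmall` proper, adding for every `F : ℕ → ℕ` one set `A` with `F[A] ∈ I_g`. If
`g ∘ F` does not tend to `0` along the current filter, some positive set `{a | ε ≤ g (F a)}` has
finite image. Otherwise a Mathias-type forcing whose conditions carry a budget for the `g`-mass
of `F[stem]` yields a non-small pseudo-intersection `A` with `F[A]` of finite mass: the growth of
`τ` guarantees that non-small sets on which `g ∘ F` is tiny contain, far out, blocks of `τ_Q(n)`
points whose image has tiny mass.
-/

open Cardinal
open scoped Topology

universe u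

open Finset in
theorem exists_subset_card_eq_sum_image_le {α β : Type*} [DecidableEq β] {f : β → ℝ}
    (hf : ∀ m, 0 ≤ f m) (F : α → β) {W : Finset α} {b : ℝ} (hWb : ∀ a ∈ W, f (F a) ≤ b)
    {t N : ℕ} (ht : 0 < t) (hbig : ((W.image F).filter fun m => b / t < f m).card ≤ N)
    (hW : t * (t + N) < W.card) :
    ∃ S ⊆ W, S.card = t ∧ ∑ m ∈ S.image F, f m ≤ b := by
  by_contra! hcon
  have hfiber : ∀ m ∈ W.image F, (W.filter (F · = m)).card < t := by
    intro m hm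
    by_contra! h
    obtain ⟨S, hS, hScard⟩ := exists_subset_card_eq h
    obtain ⟨a, ha, rfl⟩ := mem_image.1 hm
    have hSF : S.image F ⊆ {F a} := by
      intro _ hx
      obtain ⟨a', ha', rfl⟩ := mem_image.1 hx
      exact Finset.mem_singleton.2 (mem_filter.1 (hS ha')).2
    have := sum_le_sum_of_subset_of_nonneg hSF fun i _ _ => hf i
    have := hcon S (hS.trans (filter_subset _ _)) hScard
    simp only [sum_singleton] at *
    linarith [hWb a ha]
  have hcheap : ((W.image F).filter fun m => f m ≤ b / t).card < t := by
    by_contra! h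
    obtain ⟨V, hV, hVcard⟩ := exists_subset_card_eq h
    obtain ⟨S', hS'W, rfl⟩ := subset_image_iff.1 (hV.trans (filter_subset _ _))
    obtain ⟨S, hSS', hScard⟩ := exists_subset_card_eq (hVcard.symm.le.trans card_image_le)
    have h1 := sum_le_sum_of_subset_of_nonneg (image_subset_image (f := F) hSS') fun i _ _ => hf i
    have h2 : ∑ m ∈ S'.image F, f m ≤ (S'.image F).card • (b / t) :=
      sum_le_card_nsmul _ _ _ fun m hm => (mem_filter.1 (hV hm)).2
    rw [hVcard, nsmul_eq_mul, mul_div_cancel₀ _ (by positivity)] at h2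
    linarith [hcon S (hSS'.trans hS'W) hScard]
  have himage : (W.image F).card < t + N := by
    rw [← card_filter_add_card_filter_not fun m => f m ≤ b / t]
    simp only [not_le]
    omega
  have hWcard : W.card ≤ (W.image F).card * t := by
    rw [card_eq_sum_card_image F W, ← smul_eq_mul]
    exact sum_le_card_nsmul _ _ _ fun m hm => (hfiber m hm).le
  nlinarith

theorem Filter.neBot_generate_inf_iff {α : Type*} {S : Set (Set α)} {L : Filter α} :
    (generate S ⊓ L).NeBot ↔ ∀ t ⊆ S, t.Finite → (generate t ⊓ L).NeBot := by
  refine ⟨fun h t htS _ => h.mono (inf_le_inf_right L (le_generate_iff.2 fun s hs =>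
    mem_generate_of_mem (htS hs))), fun h => inf_neBot_iff.2 fun p hp q hq => ?_⟩
  obtain ⟨t, htS, htfin, htp⟩ := mem_generate_iff.1 hp
  exact ((inf_neBot_iff.1 (h t htS htfin)) (mem_generate_iff.2 ⟨t, subset_rfl, htfin, subset_rfl⟩)
    hq).mono (inter_subset_inter_left q htp)

theorem exists_serving_range_of_step {T β : Type u} (P : Set β → Prop)
    (hP : ∀ S, P S ↔ ∀ t ⊆ S, t.Finite → P t) (hP₀ : P ∅) (serves : T → β → Prop)
    (step : ∀ S : Set β, #S < #T → P S → ∀ i, ∃ b, serves i b ∧ P (insert b S)) :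
    ∃ b : T → β, P (range b) ∧ ∀ i, serves i (b i) := by
  classical
  rcases isEmpty_or_nonempty T with hT | hT
  · exact ⟨isEmptyElim, by rwa [range_eq_empty], isEmptyElim⟩
  have : Nonempty β := ⟨(step ∅ (by simpa using pos_iff_ne_zero.2 (mk_ne_zero T)) hP₀
    (Classical.arbitrary T)).choose⟩
  choose! next hnext using step
  obtain ⟨e⟩ : Nonempty ((#T).ord.ToType ≃ T) := Cardinal.eq.1 (mk_ord_toType _)
  let c : (#T).ord.ToType → β :=
    wellFounded_lt.fix fun i rec => next (range fun j : Iio i => rec j j.2) (e i)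
  have hc (i) : c i = next (c '' Iio i) (e i) := by
    simp only [c]
    rw [wellFounded_lt.fix_eq, image_eq_range]
  -- a finite subset of `c '' s` lies in a single stage `c '' Iic j`
  have hunion (s) (hs : ∀ j ∈ s, P (c '' Iic j)) : P (c '' s) := by
    refine (hP _).2 fun t hts htfin => ?_
    obtain ⟨u, hus, hut⟩ := Finset.subset_set_image_iff.1 (htfin.coe_toFinset.symm ▸ hts)
    rw [← htfin.coe_toFinset, ← hut, Finset.coe_image]
    rcases u.eq_empty_or_nonempty with rfl | hu
    · simpa using hP₀
    exact (hP _).1 (hs _ (hus (u.max'_mem hu))) _ (image_mono fun j hj => u.le_max' j hj)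
      ((u.finite_toSet).image c)
  have hcard (i) : #(c '' Iio i) < #T := mk_image_le.trans_lt <|
    (mk_Iio_lt i (by rw [mk_ord_toType, Ordinal.type_toType])).trans_eq (mk_ord_toType _)
  have hstage (i) : P (c '' Iic i) := by
    refine WellFoundedLT.induction (motive := fun i => P (c '' Iic i)) i fun i ih => ?_
    rw [← Iio_insert, image_insert_eq, hc]
    exact (hnext _ (hcard i) (hunion _ ih) (e i)).2
  refine ⟨c ∘ e.symm, ?_, fun i => ?_⟩
  · rw [EquivLike.range_comp, ← image_univ]
    exact hunion _ fun j _ => hstage j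
  · rw [Function.comp_apply, hc]
    simpa only [e.apply_symm_apply] using
      (hnext _ (hcard _) (hunion _ fun j _ => hstage j) (e (e.symm i))).1

theorem SigmaCentered.of_key {P κ : Type} [PartialOrder P] [Nonempty P] [Countable κ]
    (key : P → κ) (h : ∀ (x : κ) (T : Finset P), (∀ p ∈ T, key p = x) → ∃ r, ∀ p ∈ T, r ≤ p) :
    SigmaCentered P := by
  obtain ⟨e, he⟩ := Countable.exists_injective_nat κ
  refine ⟨e ∘ key, fun n T hT => ?_⟩
  rcases T.eq_empty_or_nonempty with rfl | ⟨p₀, hp₀⟩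
  · exact h (key (Classical.arbitrary P)) ∅ (by simp)
  · exact h (key p₀) T fun p hp => he ((hT hp).trans (hT hp₀).symm)

theorem MASigmaCentered.exists_filter_meets (hMA : MASigmaCentered) {P ι : Type} [PartialOrder P]
    [Nonempty P] (hP : SigmaCentered P) (D : ι → Set P) (hι : #ι < 𝔠)
    (hD : ∀ i, DenseBelow (D i)) : ∃ G, PosetFilter G ∧ ∀ i, (G ∩ D i).Nonempty := by
  obtain ⟨G, hG, hmeet⟩ := hMA P hP (range D) (mk_range_le.trans_lt hι) (forall_mem_range.2 hD)
  exact ⟨G, hG, fun i => hmeet _ (mem_range_self i)⟩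

theorem summable_indicator_of_sum_le {ι : Type*} {f : ι → ℝ} (hf : ∀ i, 0 ≤ f i) {A : Set ι}
    {C : ℝ} (h : ∀ M : Finset ι, ↑M ⊆ A → ∑ i ∈ M, f i ≤ C) : Summable (A.indicator f) := by
  classical
  refine summable_of_sum_le (c := C) (fun i => indicator_nonneg (fun i _ => hf i) i) fun u => ?_
  calc ∑ i ∈ u, A.indicator f i = ∑ i ∈ u with i ∈ A, f i :=
        Finset.sum_indicator_eq_sum_filter u (fun _ => f) (fun _ => A) id
    _ ≤ C := h _ fun i hi => (Finset.mem_filter.1 hi).2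

namespace IgUltrafilter

variable (g : ℕ → ℝ)

/-- `τ_{Q+1}(n) ≥ 2 τ_Q(n)` makes small sets closed under unions, and
`τ_{Q+1}(n) > τ_Q(n) (τ_Q(n) + #{m | g m ≥ 1 / ((n + 1) τ_Q(n))})` is what
`exists_subset_card_eq_sum_image_le` needs to find a cheap block of `τ_Q(n)` points. -/
noncomputable def scale : ℕ → ℕ → ℕ
  | 0, n => n + 1
  | Q + 1, n => (scale Q n + {m | (((n + 1) * scale Q n : ℕ) : ℝ)⁻¹ ≤ g m}.ncard + 1) ^ 2

noncomputable def diag (n : ℕ) : ℕ := scale g n n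

lemma scale_pos (Q n : ℕ) : 0 < scale g Q n := by
  cases Q <;> simp [scale]

lemma scale_lt_scale_succ (Q n : ℕ) : scale g Q n < scale g (Q + 1) n := by
  rw [scale]
  generalize scale g Q n = x
  generalize Set.ncard _ = y
  nlinarith [Nat.zero_le (x * y), Nat.zero_le (x * x)]

lemma scale_mono (n : ℕ) : Monotone (scale g · n) :=
  monotone_nat_of_le_succ fun Q => (scale_lt_scale_succ g Q n).le

lemma two_mul_scale_le_scale_succ (Q n : ℕ) : 2 * scale g Q n ≤ scale g (Q + 1) n := by
  rw [scale]
  generalize scale g Q n = x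
  generalize Set.ncard _ = y
  nlinarith [Nat.zero_le (x * y), Nat.zero_le (x * x)]

lemma mul_add_lt_scale_succ (Q n : ℕ) :
    scale g Q n * (scale g Q n + {m | (((n + 1) * scale g Q n : ℕ) : ℝ)⁻¹ ≤ g m}.ncard) <
      scale g (Q + 1) n := by
  rw [scale]
  generalize scale g Q n = x
  generalize Set.ncard _ = y
  nlinarith

open scoped Classical in
noncomputable def count (X : Set ℕ) (k : ℕ) : ℕ := Nat.count (· ∈ X) k

lemma count_mono {X Y : Set ℕ} (h : X ⊆ Y) (k : ℕ) : count X k ≤ count Y k := by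
  classical
  exact Nat.count_mono_left fun _ _ hx => h hx

lemma count_union_le (X Y : Set ℕ) (k : ℕ) : count (X ∪ Y) k ≤ count X k + count Y k := by
  classical
  simp only [count, Nat.count_eq_card_filter_range]
  refine (Finset.card_le_card fun a ha => ?_).trans (Finset.card_union_le _ _)
  simp only [Finset.mem_union, Finset.mem_filter, mem_union] at ha ⊢
  tauto

lemma card_le_count {X : Set ℕ} {S : Finset ℕ} {k : ℕ} (hSX : ↑S ⊆ X) (hSk : ∀ a ∈ S, a < k) :
    S.card ≤ count X k := by
  classical
  rw [count, Nat.count_eq_card_filter_range]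
  exact Finset.card_le_card fun a ha => Finset.mem_filter.2 ⟨Finset.mem_range.2 (hSk a ha), hSX ha⟩

def IsSmall (X : Set ℕ) : Prop :=
  ∃ Q, ∀ᶠ n in atTop, count X (diag g n) < scale g Q n

variable {g}

lemma IsSmall.mono {X Y : Set ℕ} (hY : IsSmall g Y) (hXY : X ⊆ Y) : IsSmall g X :=
  hY.imp fun _ h => h.mono fun _ hn => (count_mono hXY _).trans_lt hn

lemma IsSmall.union {X Y : Set ℕ} (hX : IsSmall g X) (hY : IsSmall g Y) : IsSmall g (X ∪ Y) := by
  obtain ⟨Q, hQ⟩ := hX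
  obtain ⟨Q', hQ'⟩ := hY
  refine ⟨max Q Q' + 1, (hQ.and hQ').mono fun n ⟨hn, hn'⟩ => ?_⟩
  have h₁ : scale g Q n ≤ scale g (max Q Q') n := scale_mono g n (le_max_left Q Q')
  have h₂ : scale g Q' n ≤ scale g (max Q Q') n := scale_mono g n (le_max_right Q Q')
  have := two_mul_scale_le_scale_succ g (max Q Q') n
  have := count_union_le X Y (diag g n)
  omega

lemma _root_.Set.Finite.isSmall {X : Set ℕ} (hX : X.Finite) : IsSmall g X := by
  classical
  refine ⟨0, (eventually_ge_atTop hX.toFinset.card).mono fun n hn => ?_⟩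
  have := Nat.count_le_card (p := (· ∈ X)) hX (diag g n)
  simp only [count, scale]
  omega

lemma not_isSmall_univ : ¬ IsSmall g univ := by
  rintro ⟨Q, hQ⟩
  obtain ⟨n, hn, hQn⟩ := (hQ.and (eventually_ge_atTop Q)).exists
  simp only [count, mem_univ, Nat.count_true, diag] at hn
  exact hn.not_ge (scale_mono g n hQn)

variable (g) in
def coSmall : Filter ℕ :=
  comk (IsSmall g) finite_empty.isSmall (fun _ ht _ hs => ht.mono hs) fun _ hs _ ht => hs.union ht

lemma mem_coSmall {X : Set ℕ} : X ∈ coSmall g ↔ IsSmall g Xᶜ := mem_comk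

lemma coSmall_le_cofinite : coSmall g ≤ cofinite :=
  fun _ hX => mem_coSmall.2 (mem_cofinite.1 hX).isSmall

instance : (coSmall g).NeBot :=
  neBot_iff.2 fun h => not_isSmall_univ (g := g) <| by
    simpa using mem_coSmall.1 (h ▸ mem_bot : (∅ : Set ℕ) ∈ coSmall g)

lemma neBot_coSmall_inf_principal_iff {A : Set ℕ} :
    (coSmall g ⊓ 𝓟 A).NeBot ↔ ¬ IsSmall g A := by
  rw [← not_iff_not, not_neBot, inf_principal_eq_bot, mem_coSmall, compl_compl, not_not]

lemma not_isSmall_of_mem {l : Filter ℕ} [l.NeBot] (hl : l ≤ coSmall g) {A : Set ℕ} (hA : A ∈ l) :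
    ¬ IsSmall g A := fun hsmall => by
  have := inter_mem hA (hl (mem_coSmall.2 (by rwa [compl_compl])))
  rw [inter_compl_self] at this
  exact empty_notMem l this

lemma not_isSmall_iff {X : Set ℕ} :
    ¬ IsSmall g X ↔ ∀ Q, ∃ᶠ n in atTop, scale g Q n ≤ count X (diag g n) := by
  simp only [IsSmall, not_exists, not_eventually, not_lt]

lemma not_rapid_of_le_coSmall {U : Ultrafilter ℕ} (hU : ↑U ≤ coSmall g) : ¬ Rapid U := by
  classical
  intro hrapid
  obtain ⟨A, hA, -, hdom⟩ := hrapid (diag g)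
  obtain ⟨n, hcount, hnth⟩ :=
    ((not_isSmall_iff.1 (not_isSmall_of_mem hU hA) 0).and_eventually hdom).exists
  exact hnth.not_gt (Nat.nth_lt_of_lt_count hcount)

lemma finite_setOf_le (hg0 : Tendsto g atTop (𝓝 0)) {δ : ℝ} (hδ : 0 < δ) :
    {m | δ ≤ g m}.Finite := by
  have := hg0.eventually (gt_mem_nhds hδ)
  rw [← Nat.cofinite_eq_atTop, eventually_cofinite] at this
  simpa using this

lemma exists_finset_card_eq_scale (hg : ∀ m, 0 ≤ g m) (hg0 : Tendsto g atTop (𝓝 0))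
    (F : ℕ → ℕ) {X : Set ℕ} (hX : ¬ IsSmall g X) {b : ℝ} (hb : 0 < b)
    (hXb : ∀ a ∈ X, g (F a) ≤ b) (Q n₀ : ℕ) :
    ∃ n ≥ n₀, ∃ S : Finset ℕ, ↑S ⊆ X ∧ (∀ a ∈ S, a < diag g n) ∧ S.card = scale g Q n ∧
      ∑ m ∈ S.image F, g m ≤ b := by
  classical
  have hδ : ∀ᶠ n : ℕ in atTop, 1 / ((n : ℝ) + 1) < b :=
    tendsto_one_div_add_atTop_nhds_zero_nat.eventually (gt_mem_nhds hb)
  obtain ⟨n, hcount, hnb, hn₀⟩ := ((not_isSmall_iff.1 hX (Q + 1)).and_eventually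
    (hδ.and (eventually_ge_atTop n₀))).exists
  set t := scale g Q n
  set W := (Finset.range (diag g n)).filter (· ∈ X)
  have hWcard : W.card = count X (diag g n) := by
    rw [count, Nat.count_eq_card_filter_range]
  have htb : (((n + 1) * t : ℕ) : ℝ)⁻¹ ≤ b / t := by
    rw [Nat.cast_mul, mul_inv, div_eq_mul_inv]
    push_cast
    gcongr
    simpa using hnb.le
  have hbig : ((W.image F).filter fun m => b / t < g m).card ≤
      {m | (((n + 1) * t : ℕ) : ℝ)⁻¹ ≤ g m}.ncard := by
    rw [← ncard_coe_finset]
    refine ncard_le_ncard (fun m hm => ?_) (finite_setOf_le hg0 <|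
      inv_pos.2 (by exact_mod_cast Nat.mul_pos n.succ_pos (scale_pos g Q n)))
    exact htb.trans (Finset.mem_filter.1 hm).2.le
  obtain ⟨S, hSW, hScard, hSb⟩ := exists_subset_card_eq_sum_image_le hg F
    (fun a ha => hXb a (Finset.mem_filter.1 ha).2) (scale_pos g Q n) hbig
    (hWcard ▸ (mul_add_lt_scale_succ g Q n).trans_le hcount)
  exact ⟨n, hn₀, S, fun a ha => (Finset.mem_filter.1 (hSW ha)).2,
    fun a ha => Finset.mem_range.1 (Finset.mem_filter.1 (hSW ha)).1, hScard, hSb⟩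

/-- `g` and `F` are parameters only so that the order, which depends on them, can be an instance. -/
structure BudgetCondition (g : ℕ → ℝ) (F : ℕ → ℕ) (𝓗 : Filter ℕ) where
  stem : Finset ℕ
  budget : ℕ
  reservoir : Set ℕ
  reservoir_mem : reservoir ∈ 𝓗

namespace BudgetCondition

variable {g : ℕ → ℝ} {F : ℕ → ℕ} {𝓗 : Filter ℕ}

noncomputable def weight (p : BudgetCondition g F 𝓗) : ℝ :=
  ∑ m ∈ p.stem.image F, g m + 2⁻¹ ^ p.budget

instance : PartialOrder (BudgetCondition g F 𝓗) where
  le p q := q.stem ⊆ p.stem ∧ p.reservoir ⊆ q.reservoir ∧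
    (p.stem : Set ℕ) ⊆ q.stem ∪ q.reservoir ∧ p.weight ≤ q.weight
  le_refl p := ⟨subset_rfl, subset_rfl, subset_union_left, le_rfl⟩
  le_trans p q r hpq hqr := ⟨hqr.1.trans hpq.1, hpq.2.1.trans hqr.2.1,
    hpq.2.2.1.trans (union_subset hqr.2.2.1 (hqr.2.1.trans subset_union_right)),
    hpq.2.2.2.trans hqr.2.2.2⟩
  le_antisymm := by
    rintro ⟨s, k, G, hG⟩ ⟨s', k', G', hG'⟩ ⟨hs, hG, -, hw⟩ ⟨hs', hG', -, hw'⟩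
    obtain rfl : s = s' := hs'.antisymm hs
    obtain rfl : G = G' := hG.antisymm hG'
    obtain rfl : k = k' := pow_right_injective₀ (by norm_num : (0 : ℝ) < 2⁻¹) (by norm_num)
      (by simp only [weight] at hw hw'; linarith)
    rfl

instance : Nonempty (BudgetCondition g F 𝓗) := ⟨⟨∅, 0, univ, univ_mem⟩⟩

lemma sigmaCentered : SigmaCentered (BudgetCondition g F 𝓗) := by
  refine SigmaCentered.of_key (fun p => (p.stem, p.budget)) fun ⟨s, k⟩ T hT => ?_
  refine ⟨⟨s, k, ⋂ p ∈ T, p.reservoir, (biInter_finset_mem T).2 fun p _ => p.reservoir_mem⟩,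
    fun p hp => ?_⟩
  obtain ⟨rfl, rfl⟩ := Prod.ext_iff.1 (hT p hp)
  exact ⟨subset_rfl, biInter_subset_of_mem hp, subset_union_left, le_rfl⟩

lemma denseBelow_reservoir_subset {H : Set ℕ} (hH : H ∈ 𝓗) :
    DenseBelow {p : BudgetCondition g F 𝓗 | p.reservoir ⊆ H} := fun p =>
  ⟨⟨p.stem, p.budget, p.reservoir ∩ H, inter_mem p.reservoir_mem hH⟩, inter_subset_right,
    subset_rfl, inter_subset_left, subset_union_left, le_rfl⟩

lemma denseBelow_scale_le_count (hg : ∀ m, 0 ≤ g m) (hg0 : Tendsto g atTop (𝓝 0)) [𝓗.NeBot]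
    (h𝓗 : 𝓗 ≤ coSmall g) (hF : Tendsto (g ∘ F) 𝓗 (𝓝 0)) (Q n₀ : ℕ) :
    DenseBelow {p : BudgetCondition g F 𝓗 | ∃ n ≥ n₀, scale g Q n ≤ count p.stem (diag g n)} := by
  rintro ⟨s, k, G, hG⟩
  have hb : (0 : ℝ) < 2⁻¹ ^ (k + 1) := by positivity
  have hX : G ∩ (g ∘ F) ⁻¹' Iic (2⁻¹ ^ (k + 1)) ∈ 𝓗 := inter_mem hG (hF (Iic_mem_nhds hb))
  obtain ⟨n, hn, S, hSX, hSn, hScard, hSb⟩ := exists_finset_card_eq_scale hg hg0 F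
    (not_isSmall_of_mem h𝓗 hX) hb (fun a ha => ha.2) Q n₀
  have hcount : scale g Q n ≤ count ↑(s ∪ S) (diag g n) :=
    hScard ▸ card_le_count (by simp) hSn
  have hweight : ∑ m ∈ (s ∪ S).image F, g m ≤ ∑ m ∈ s.image F, g m + 2⁻¹ ^ (k + 1) := by
    have hinter : 0 ≤ ∑ m ∈ s.image F ∩ S.image F, g m := Finset.sum_nonneg fun m _ => hg m
    rw [Finset.image_union]
    linarith [Finset.sum_union_inter (s₁ := s.image F) (s₂ := S.image F) (f := g)]
  refine ⟨⟨s ∪ S, k + 1, G, hG⟩, ⟨n, hn, hcount⟩, Finset.subset_union_left, subset_rfl, ?_, ?_⟩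
  · rw [Finset.coe_union]
    exact union_subset_union_right _ (hSX.trans inter_subset_left)
  · simp only [weight, pow_succ] at hweight ⊢
    linarith

variable {Gen : Set (BudgetCondition g F 𝓗)}

lemma stem_iUnion_subset (hGen : PosetFilter Gen) {p : BudgetCondition g F 𝓗} (hp : p ∈ Gen) :
    ⋃ q ∈ Gen, (q.stem : Set ℕ) ⊆ p.stem ∪ p.reservoir :=
  iUnion₂_subset fun q hq => by
    obtain ⟨r, -, hrp, hrq⟩ := hGen.2.2 p hp q hq
    exact (Finset.coe_subset.2 hrq.1).trans hrp.2.2.1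

lemma exists_mem_le_subset_stem (hGen : PosetFilter Gen) {p₀ : BudgetCondition g F 𝓗}
    (hp₀ : p₀ ∈ Gen) {u : Finset ℕ} (hu : ↑u ⊆ ⋃ q ∈ Gen, (q.stem : Set ℕ)) :
    ∃ r ∈ Gen, r ≤ p₀ ∧ ↑u ⊆ (r.stem : Set ℕ) := by
  have hdir : DirectedOn (fun r₁ r₂ : BudgetCondition g F 𝓗 => (r₁.stem : Set ℕ) ⊆ r₂.stem)
      {r ∈ Gen | r ≤ p₀} := by
    rintro r₁ ⟨h₁, h₁'⟩ r₂ ⟨h₂, -⟩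
    obtain ⟨r, hr, hr₁, hr₂⟩ := hGen.2.2 r₁ h₁ r₂ h₂
    exact ⟨r, ⟨hr, hr₁.trans h₁'⟩, Finset.coe_subset.2 hr₁.1, Finset.coe_subset.2 hr₂.1⟩
  have hcover : ⋃ q ∈ Gen, (q.stem : Set ℕ) ⊆ ⋃ r ∈ {r ∈ Gen | r ≤ p₀}, (r.stem : Set ℕ) := by
    refine iUnion₂_subset fun q hq => ?_
    obtain ⟨r, hr, hrq, hrp₀⟩ := hGen.2.2 q hq p₀ hp₀
    exact (Finset.coe_subset.2 hrq.1).trans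
      (subset_biUnion_of_mem (u := fun r : BudgetCondition g F 𝓗 => (r.stem : Set ℕ))
        (show r ∈ {r ∈ Gen | r ≤ p₀} from ⟨hr, hrp₀⟩))
  obtain ⟨r, ⟨hr, hrp₀⟩, hur⟩ :=
    hdir.exists_mem_subset_of_finset_subset_biUnion (by exact ⟨p₀, hp₀, le_rfl⟩) (hu.trans hcover)
  exact ⟨r, hr, hrp₀, hur⟩

lemma sum_le_weight (hg : ∀ m, 0 ≤ g m) (hGen : PosetFilter Gen) {p₀ : BudgetCondition g F 𝓗}
    (hp₀ : p₀ ∈ Gen) {M : Finset ℕ} (hM : ↑M ⊆ F '' ⋃ q ∈ Gen, (q.stem : Set ℕ)) :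
    ∑ m ∈ M, g m ≤ p₀.weight := by
  obtain ⟨u, hu, rfl⟩ := Finset.subset_set_image_iff.1 hM
  obtain ⟨r, -, hrp₀, hur⟩ := exists_mem_le_subset_stem hGen hp₀ hu
  calc ∑ m ∈ u.image F, g m ≤ ∑ m ∈ r.stem.image F, g m :=
        Finset.sum_le_sum_of_subset_of_nonneg
          (Finset.image_subset_image (Finset.coe_subset.1 hur)) fun m _ _ => hg m
    _ ≤ r.weight := le_add_of_nonneg_right (by positivity)
    _ ≤ p₀.weight := hrp₀.2.2.2

end BudgetCondition

theorem exists_pseudoIntersection_image_mem_Ig (hMA : MASigmaCentered) (hg : ∀ m, 0 ≤ g m)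
    (hg0 : Tendsto g atTop (𝓝 0)) {𝓗 : Filter ℕ} [𝓗.NeBot] (h𝓗 : 𝓗 ≤ coSmall g)
    {F : ℕ → ℕ} (hF : Tendsto (g ∘ F) 𝓗 (𝓝 0)) {S : Set (Set ℕ)} (hS𝓗 : S ⊆ 𝓗.sets)
    (hS : #S < 𝔠) : ∃ A, ¬ IsSmall g A ∧ (∀ H ∈ S, (A \ H).Finite) ∧ F '' A ∈ Ig g := by
  let D : S ⊕ (ℕ × ℕ) → Set (BudgetCondition g F 𝓗) :=
    Sum.elim (fun H => {p | p.reservoir ⊆ H})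
      fun x => {p | ∃ n ≥ x.2, scale g x.1 n ≤ count p.stem (diag g n)}
  have hD : ∀ i, DenseBelow (D i) := by
    rintro (⟨H, hH⟩ | ⟨Q, n₀⟩)
    · exact BudgetCondition.denseBelow_reservoir_subset (hS𝓗 hH)
    · exact BudgetCondition.denseBelow_scale_le_count hg hg0 h𝓗 hF Q n₀
  have hcard : #(S ⊕ (ℕ × ℕ)) < 𝔠 := by
    simpa using add_lt_of_lt aleph0_le_continuum hS aleph0_lt_continuum
  obtain ⟨Gen, hGen, hmeet⟩ := hMA.exists_filter_meets BudgetCondition.sigmaCentered D hcard hD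
  obtain ⟨p₀, hp₀⟩ := hGen.1
  refine ⟨⋃ p ∈ Gen, (p.stem : Set ℕ), not_isSmall_iff.2 fun Q => ?_, fun H hH => ?_,
    summable_indicator_of_sum_le hg fun M hM => BudgetCondition.sum_le_weight hg hGen hp₀ hM⟩
  · refine frequently_atTop.2 fun n₀ => ?_
    obtain ⟨p, hp, n, hn, hcount⟩ := hmeet (Sum.inr (Q, n₀))
    exact ⟨n, hn, hcount.trans
      (count_mono (subset_biUnion_of_mem (u := fun p => (p.stem : Set ℕ)) hp) _)⟩
  · obtain ⟨p, hp, hpH⟩ := hmeet (Sum.inl ⟨H, hH⟩)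
    refine p.stem.finite_toSet.subset fun a ⟨ha, haH⟩ => ?_
    exact (BudgetCondition.stem_iUnion_subset hGen hp ha).resolve_right fun h => haH (hpH h)

theorem exists_image_mem_Ig_neBot_insert (hMA : MASigmaCentered) (hg : ∀ m, 0 ≤ g m)
    (hg0 : Tendsto g atTop (𝓝 0)) {S : Set (Set ℕ)} (hS : #S < 𝔠)
    (hSne : (generate S ⊓ coSmall g).NeBot) (F : ℕ → ℕ) :
    ∃ A, F '' A ∈ Ig g ∧ (generate (insert A S) ⊓ coSmall g).NeBot := by
  simp only [insert_eq, generate_union, generate_singleton, inf_assoc]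
  by_cases hF : Tendsto (g ∘ F) (generate S ⊓ coSmall g) (𝓝 0)
  · obtain ⟨A, hA, hAS, hFA⟩ := exists_pseudoIntersection_image_mem_Ig hMA hg hg0 inf_le_right hF
      (fun H hH => mem_inf_of_left (mem_generate_of_mem hH)) hS
    have hle : coSmall g ⊓ 𝓟 A ≤ 𝓟 A ⊓ (generate S ⊓ coSmall g) := by
      refine le_inf inf_le_right (le_inf (le_generate_iff.2 fun H hH => ?_) inf_le_left)
      refine mem_inf_of_inter (coSmall_le_cofinite (hAS H hH).compl_mem_cofinite)
        (mem_principal_self A) fun a ⟨ha, haA⟩ => ?_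
      by_contra haH
      exact ha ⟨haA, haH⟩
    exact ⟨A, hFA, (neBot_coSmall_inf_principal_iff.2 hA).mono hle⟩
  · obtain ⟨ε, hε, hfreq⟩ : ∃ ε > 0, ∃ᶠ a in generate S ⊓ coSmall g, ε ≤ g (F a) := by
      by_contra! h
      exact hF (tendsto_order.2 ⟨fun b hb => .of_forall fun a => hb.trans_le (hg _), h⟩)
    refine ⟨{a | ε ≤ g (F a)}, summable_of_hasFiniteSupport ?_, ?_⟩
    · exact (finite_setOf_le hg0 hε).subset
        (support_indicator_subset.trans (image_subset_iff.2 fun a ha => ha))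
    · rw [inf_comm]
      exact frequently_iff_neBot.1 hfreq

end IgUltrafilter

open IgUltrafilter

theorem Ig_not_rapid (hMA : MASigmaCentered) (g : ℕ → ℝ) (hg : SummableTall g) :
    ∃ U : Ultrafilter ℕ, (↑U : Filter ℕ) ≤ Filter.cofinite ∧
      IUlt U (Ig g) ∧ ¬ Rapid U := by
  obtain ⟨hpos, -, hg0⟩ := hg
  obtain ⟨A, hA, hFA⟩ := exists_serving_range_of_step (T := ℕ → ℕ)
    (fun S => (generate S ⊓ coSmall g).NeBot) (fun _ => neBot_generate_inf_iff)
    (by rw [generate_empty, top_inf_eq]; infer_instance) (fun F A => F '' A ∈ Ig g)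
    fun S hS hSne F => exists_image_mem_Ig_neBot_insert hMA (fun m => (hpos m).le) hg0
      (by simpa using hS) hSne F
  let U := @Ultrafilter.of _ (generate (range A) ⊓ coSmall g) hA
  have hU : ↑U ≤ coSmall g := (Ultrafilter.of_le _).trans inf_le_right
  refine ⟨U, hU.trans coSmall_le_cofinite, fun F => ⟨A F, ?_, hFA F⟩, not_rapid_of_le_coSmall hU⟩
  exact Ultrafilter.of_le _ (mem_inf_of_left (mem_generate_of_mem (mem_range_self F)))
end

section
/- There exists a family D of tall summable ideals with |D| = 𝔡 (the dominating number) such that an ultrafilter U on ℕ is rapid if and only if U has nonempty intersection with every ideal in D. -/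
open Set Filter

/-- The dominating number 𝔡. -/
noncomputable def domNum : Cardinal :=
  sInf {c | ∃ F : Set (ℕ → ℕ), Cardinal.mk ↥F = c ∧
    ∀ g : ℕ → ℕ, ∃ f ∈ F, ∀ᶠ n in atTop, g n ≤ f n}

/-!
For `f : ℕ → ℕ` let `φ > f` be increasing and `g_f m = 1 / (1 + #{j | φ j ≤ m})`, which is
positive, tends to `0` and is not summable. If `A = {a₀ < a₁ < ⋯}` has `∑_{m ∈ A} g_f m < ∞`,
then, `g_f ∘ a` being antitone and summable, `(n + 1) * g_f (aₙ) → 0`, i.e. eventually more than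
`n` values of `φ` lie below `aₙ`, so `f n ≤ φ n ≤ aₙ`: the enumeration of every infinite set in
`I_{g_f}` eventually dominates `f`. Take `D = {I_{g_f} | f ∈ F}` for a dominating family `F` of
size `𝔡`. An ultrafilter meeting all of `D` is rapid, and a rapid ultrafilter contains a set
enumerated so fast that `g (aₙ) ≤ 2⁻ⁿ`, hence meets every tall summable ideal. Finally
`|D| ≤ |F| = 𝔡`, while the enumerations of chosen infinite members of the ideals in `D` form a
dominating family, so `𝔡 ≤ |D|`.
-/

open Finset in
theorem Antitone.tendsto_natCast_mul_of_summable {u : ℕ → ℝ} (hu : Antitone u)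
    (hs : Summable u) : Tendsto (fun n : ℕ => (n : ℝ) * u n) atTop (nhds 0) := by
  have hu0 (n : ℕ) : 0 ≤ u n := not_lt.1 fun h => not_summable_of_antitone_of_neg hu h hs
  have htail : Tendsto (fun n : ℕ => 2 * ∑' i, u (i + n / 2)) atTop (nhds 0) := by
    have := ((tendsto_sum_nat_add u).const_mul 2).comp (Nat.tendsto_div_const_atTop two_ne_zero)
    rwa [mul_zero] at this
  refine squeeze_zero (fun n : ℕ => mul_nonneg n.cast_nonneg (hu0 n)) (fun n : ℕ => ?_) htail
  have hblock : ((n - n / 2 : ℕ) : ℝ) * u n ≤ ∑ i ∈ range (n - n / 2), u (i + n / 2) := by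
    simpa using card_nsmul_le_sum (range (n - n / 2)) (fun i => u (i + n / 2)) (u n)
      fun i hi => hu (by simp only [Finset.mem_range] at hi; omega)
  have hn : (n : ℝ) ≤ 2 * (n - n / 2 : ℕ) := by norm_cast; omega
  calc (n : ℝ) * u n ≤ 2 * ((n - n / 2 : ℕ) * u n) := by nlinarith [hu0 n]
    _ ≤ 2 * ∑' i, u (i + n / 2) := by
      gcongr
      exact hblock.trans <| ((summable_nat_add_iff _).2 hs).sum_le_tsum _ fun i _ => hu0 _

theorem summable_indicator_range_iff {α ι κ : Type*} [AddCommMonoid α] [TopologicalSpace α]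
    {g : ι → α} {φ : κ → ι} (hφ : Function.Injective φ) :
    Summable ((range φ).indicator g) ↔ Summable (g ∘ φ) := by
  rw [← hφ.summable_iff fun x hx => indicator_of_notMem hx g]
  exact summable_congr fun k => by simp

theorem summable_indicator_iff_nth {g : ℕ → ℝ} {A : Set ℕ} (hA : A.Infinite) :
    Summable (A.indicator g) ↔ Summable (g ∘ Nat.nth (· ∈ A)) := by
  have hrange : range (Nat.nth (· ∈ A)) = A := Nat.range_nth_of_infinite hA
  conv_lhs => rw [← hrange]
  exact summable_indicator_range_iff (Nat.nth_injective hA)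

theorem Set.Infinite.of_mem_ultrafilter {α : Type*} {U : Ultrafilter α}
    (hU : (↑U : Filter α) ≤ cofinite) {A : Set α} (hA : A ∈ U) : A.Infinite :=
  cofinite_inf_principal_neBot_iff.1 (neBot_of_le (le_inf hU (le_principal_iff.2 hA)))

theorem eventually_norm_le_geometric_of_tendsto_zero {g : ℕ → ℝ} (hg : Tendsto g atTop (nhds 0))
    (k : ℕ) : ∀ᶠ m in atTop, ‖g m‖ ≤ (1 / 2) ^ k :=
  (tendsto_zero_iff_norm_tendsto_zero.1 hg).eventually_le_const (by positivity)

theorem exists_infinite_mem_Ig {g : ℕ → ℝ} (hg : Tendsto g atTop (nhds 0)) :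
    ∃ A : Set ℕ, A.Infinite ∧ A ∈ Ig g := by
  obtain ⟨φ, hφ, hφg⟩ :=
    extraction_forall_of_eventually (eventually_norm_le_geometric_of_tendsto_zero hg)
  refine ⟨range φ, infinite_range_of_injective hφ.injective, ?_⟩
  exact (summable_indicator_range_iff hφ.injective).2 <| .of_norm_bounded summable_geometric_two hφg

theorem Rapid.exists_mem_Ig {U : Ultrafilter ℕ} (hU : Rapid U) {g : ℕ → ℝ}
    (hg : Tendsto g atTop (nhds 0)) : ∃ A ∈ U, A ∈ Ig g := by
  choose T hT using fun k => eventually_atTop.1 (eventually_norm_le_geometric_of_tendsto_zero hg k)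
  obtain ⟨A, hAU, hA, hTA⟩ := hU T
  refine ⟨A, hAU, (summable_indicator_iff_nth hA).2 ?_⟩
  exact .of_norm_bounded_eventually_nat summable_geometric_two <| hTA.mono fun k hk => hT k _ hk

def majorant (f : ℕ → ℕ) (k : ℕ) : ℕ := ∑ i ∈ Finset.range (k + 1), (f i + 1)

theorem lt_majorant (f : ℕ → ℕ) (k : ℕ) : f k < majorant f k :=
  Finset.single_le_sum (f := fun i => f i + 1) (fun _ _ => Nat.zero_le _)
    (Finset.self_mem_range_succ k)

theorem self_lt_majorant (f : ℕ → ℕ) (k : ℕ) : k < majorant f k := by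
  simpa [majorant] using Finset.card_nsmul_le_sum (Finset.range (k + 1)) (fun i => f i + 1) 1
    (by simp)

theorem monotone_majorant (f : ℕ → ℕ) : Monotone (majorant f) := fun _ _ h =>
  Finset.sum_le_sum_of_subset (Finset.range_subset_range.2 (by omega))

def majorantCount (f : ℕ → ℕ) (m : ℕ) : ℕ :=
  Nat.find (p := fun j => m < majorant f j) ⟨m, self_lt_majorant f m⟩

theorem lt_majorantCount_iff {f : ℕ → ℕ} {m j : ℕ} :
    j < majorantCount f m ↔ majorant f j ≤ m := by
  rw [majorantCount, Nat.lt_find_iff]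
  exact ⟨fun h => not_lt.1 (h j le_rfl), fun h i hi => not_lt.2 ((monotone_majorant f hi).trans h)⟩

theorem majorantCount_le (f : ℕ → ℕ) (m : ℕ) : majorantCount f m ≤ m :=
  Nat.find_min' (p := fun j => m < majorant f j) _ (self_lt_majorant f m)

theorem monotone_majorantCount (f : ℕ → ℕ) : Monotone (majorantCount f) := fun _ _ h =>
  not_lt.1 fun hlt => lt_irrefl _ (lt_majorantCount_iff.2 ((lt_majorantCount_iff.1 hlt).trans h))

noncomputable def rapidWeight (f : ℕ → ℕ) (m : ℕ) : ℝ := 1 / (majorantCount f m + 1)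

theorem antitone_rapidWeight (f : ℕ → ℕ) : Antitone (rapidWeight f) := fun _ _ h => by
  unfold rapidWeight
  gcongr
  exact monotone_majorantCount f h

theorem summableTall_rapidWeight (f : ℕ → ℕ) : SummableTall (rapidWeight f) := by
  refine ⟨fun m => by unfold rapidWeight; positivity, fun hs => ?_, ?_⟩
  · have hharmonic : ¬ Summable fun m : ℕ => 1 / ((m : ℝ) + 1) := by
      exact_mod_cast mt (summable_nat_add_iff 1).1 Real.not_summable_one_div_natCast
    refine hharmonic (hs.of_nonneg_of_le (fun m => by positivity) fun m => ?_)
    unfold rapidWeight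
    gcongr
    exact majorantCount_le f m
  · have hcount : Tendsto (majorantCount f) atTop atTop :=
      tendsto_atTop_atTop.2 fun j => ⟨majorant f j, fun m hm => (lt_majorantCount_iff.2 hm).le⟩
    exact tendsto_one_div_add_atTop_nhds_zero_nat.comp hcount

theorem eventually_le_nth_of_mem_Ig {f : ℕ → ℕ} {A : Set ℕ} (hA : A.Infinite)
    (hAf : A ∈ Ig (rapidWeight f)) : ∀ᶠ n in atTop, f n ≤ Nat.nth (· ∈ A) n := by
  set a := Nat.nth (· ∈ A)
  have hsum : Summable (rapidWeight f ∘ a) := (summable_indicator_iff_nth hA).1 hAf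
  have hanti : Antitone (rapidWeight f ∘ a) :=
    (antitone_rapidWeight f).comp_monotone (Nat.nth_monotone hA)
  have hlim : Tendsto (fun n : ℕ => ((n : ℝ) + 1) * rapidWeight f (a n)) atTop (nhds 0) := by
    simpa [add_mul] using (hanti.tendsto_natCast_mul_of_summable hsum).add hsum.tendsto_atTop_zero
  filter_upwards [hlim.eventually_lt_const one_pos] with n hn
  have hcount : n < majorantCount f (a n) := by
    rw [rapidWeight, mul_one_div, div_lt_one (by positivity)] at hn
    exact Nat.succ_lt_succ_iff.1 (by exact_mod_cast hn)
  exact (lt_majorant f n).le.trans (lt_majorantCount_iff.1 hcount)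

def IsDominating (F : Set (ℕ → ℕ)) : Prop := ∀ g : ℕ → ℕ, ∃ f ∈ F, ∀ᶠ n in atTop, g n ≤ f n

def dominatingCards : Set Cardinal := {c | ∃ F : Set (ℕ → ℕ), Cardinal.mk F = c ∧ IsDominating F}

theorem exists_isDominating_mk_eq_domNum :
    ∃ F : Set (ℕ → ℕ), Cardinal.mk F = domNum ∧ IsDominating F :=
  csInf_mem (s := dominatingCards)
    ⟨_, univ, rfl, fun g => ⟨g, mem_univ g, .of_forall fun _ => le_rfl⟩⟩

theorem domNum_le_mk {ι : Type} (h : ι → ℕ → ℕ) (hh : IsDominating (range h)) :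
    domNum ≤ Cardinal.mk ι :=
  (csInf_le (s := dominatingCards) (OrderBot.bddBelow _) ⟨range h, rfl, hh⟩).trans
    Cardinal.mk_range_le

theorem IsDominating.domNum_le_mk_image_Ig {F : Set (ℕ → ℕ)} (hF : IsDominating F) :
    domNum ≤ Cardinal.mk ((fun f => Ig (rapidWeight f)) '' F) := by
  have hmem (I : (fun f => Ig (rapidWeight f)) '' F) : ∃ A : Set ℕ, A.Infinite ∧ A ∈ I.1 := by
    obtain ⟨_, f, -, rfl⟩ := I
    exact exists_infinite_mem_Ig (summableTall_rapidWeight f).2.2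
  choose A hA hAI using hmem
  refine domNum_le_mk (fun I => Nat.nth (· ∈ A I)) fun x => ?_
  obtain ⟨f, hf, hxf⟩ := hF x
  let I : (fun f => Ig (rapidWeight f)) '' F := ⟨_, f, hf, rfl⟩
  refine ⟨_, mem_range_self I, ?_⟩
  filter_upwards [hxf, eventually_le_nth_of_mem_Ig (hA I) (hAI I)] with n h₁ h₂ using h₁.trans h₂

theorem IsDominating.rapid_of_forall_exists_mem_Ig {F : Set (ℕ → ℕ)} (hF : IsDominating F)
    {U : Ultrafilter ℕ} (hU : (↑U : Filter ℕ) ≤ cofinite)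
    (hUF : ∀ f ∈ F, ∃ A ∈ U, A ∈ Ig (rapidWeight f)) : Rapid U := by
  intro x
  obtain ⟨f, hf, hxf⟩ := hF x
  obtain ⟨A, hAU, hAf⟩ := hUF f hf
  have hA : A.Infinite := .of_mem_ultrafilter hU hAU
  refine ⟨A, hAU, hA, ?_⟩
  filter_upwards [hxf, eventually_le_nth_of_mem_Ig hA hAf] with n h₁ h₂ using h₁.trans h₂

theorem atmostD :
    ∃ D : Set (Set (Set ℕ)),
      (∀ I ∈ D, ∃ g : ℕ → ℝ, SummableTall g ∧ I = Ig g) ∧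
      Cardinal.mk ↥D = domNum ∧
      ∀ U : Ultrafilter ℕ, (↑U : Filter ℕ) ≤ Filter.cofinite →
        (Rapid U ↔ ∀ I ∈ D, ∃ A ∈ U, A ∈ I) := by
  obtain ⟨F, hFcard, hF⟩ := exists_isDominating_mk_eq_domNum
  refine ⟨(fun f => Ig (rapidWeight f)) '' F, ?_, ?_, fun U hU => ⟨fun hUr => ?_, fun hUF => ?_⟩⟩
  · rintro _ ⟨f, -, rfl⟩
    exact ⟨_, summableTall_rapidWeight f, rfl⟩
  · exact le_antisymm (Cardinal.mk_image_le.trans_eq hFcard) hF.domNum_le_mk_image_Ig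
  · rintro _ ⟨f, -, rfl⟩
    exact hUr.exists_mem_Ig (summableTall_rapidWeight f).2.2
  · exact hF.rapid_of_forall_exists_mem_Ig hU fun f hf => hUF _ (mem_image_of_mem _ hf)
end

section
/- For every tall summable ideal I_g there exists a strictly increasing f: ℕ → ℕ with f(j+1) ≥ f(j) + j + 1 for all j such that, with g_f(m) = 1 for m < f(0) and g_f(m) = 1/(j+1) for m ∈ [f(j), f(j+1)), if f' : ℕ → ℕ is strictly increasing and eventually dominates f, then the ideal I_{g_{f'}} is contained in I_g. -/
open Set Filter

/-- The step function `g_f`: `1` below `f 0`, and `1/(j+1)` on `[f j, f (j+1))`. -/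
noncomputable def gf (f : ℕ → ℕ) (m : ℕ) : ℝ :=
  if m < f 0 then 1 else 1 / (Nat.findGreatest (fun j => f j ≤ m) m + 1)

theorem gf_dominating_subideal (g : ℕ → ℝ) (hg : SummableTall g) :
    ∃ f : ℕ → ℕ, StrictMono f ∧ (∀ j, f j + j + 1 ≤ f (j + 1)) ∧
      ∀ f' : ℕ → ℕ, StrictMono f' → (∀ᶠ k in atTop, f k ≤ f' k) →
        Ig (gf f') ⊆ Ig g := by
  obtain ⟨hpos, -, htend⟩ := hg
  -- choose cutoffs N j beyond which g ≤ 1/(j+1)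
  have hN : ∀ j : ℕ, ∃ N : ℕ, ∀ m ≥ N, g m ≤ 1 / (j + 1 : ℝ) := by
    intro j
    have h1 : (0 : ℝ) < 1 / (j + 1 : ℝ) := by positivity
    have := (htend.eventually (eventually_le_nhds h1))
    exact eventually_atTop.1 this
  choose N hNspec using hN
  -- build f
  let f : ℕ → ℕ := fun j => Nat.rec (N 0) (fun j fj => max (N (j + 1)) (fj + j + 1)) j
  have hstep : ∀ j, f j + j + 1 ≤ f (j + 1) := fun j => le_max_right _ _
  have hfN : ∀ j, N j ≤ f j := by
    intro j; cases j with
    | zero => exact le_refl _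
    | succ j => exact le_max_left _ _
  have hmono : StrictMono f := strictMono_nat_of_lt_succ fun j => by
    have := hstep j; omega
  have hkey : ∀ j m, f j ≤ m → g m ≤ 1 / (j + 1 : ℝ) := fun j m hm =>
    hNspec j m (le_trans (hfN j) hm)
  refine ⟨f, hmono, hstep, ?_⟩
  intro f' hf' hdom A hA
  obtain ⟨k0, hk0⟩ := eventually_atTop.1 hdom
  -- for m ≥ f' k0, g m ≤ gf f' m
  have hcomp : ∀ m, f' k0 ≤ m → g m ≤ gf f' m := by
    intro m hm
    have hk0m : k0 ≤ m := le_trans (hf'.le_apply) hm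
    set J := Nat.findGreatest (fun j => f' j ≤ m) m with hJ
    have hJspec : f' J ≤ m := Nat.findGreatest_spec (P := fun j => f' j ≤ m) hk0m hm
    have hk0J : k0 ≤ J := Nat.le_findGreatest hk0m hm
    have hf0m : ¬ m < f' 0 := not_lt.2 (le_trans (hf'.monotone (Nat.zero_le k0)) hm)
    have : gf f' m = 1 / (J + 1 : ℝ) := by
      rw [gf, if_neg hf0m]
    rw [this]
    exact hkey J m (le_trans (hk0 J hk0J) hJspec)
  -- comparison for summability
  have hAshift : Summable (fun n => A.indicator (gf f') (n + f' k0)) :=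
    (summable_nat_add_iff (f' k0)).2 hA
  have : Summable (fun n => A.indicator g (n + f' k0)) := by
    refine hAshift.of_nonneg_of_le (fun n => ?_) (fun n => ?_)
    · exact Set.indicator_apply_nonneg fun _ => (hpos _).le
    · by_cases hmem : (n + f' k0) ∈ A
      · rw [Set.indicator_of_mem hmem, Set.indicator_of_mem hmem]
        exact hcomp _ (Nat.le_add_left _ _)
      · simp [Set.indicator_of_notMem hmem]
  exact (summable_nat_add_iff (f' k0)).1 this
end
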